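/- arXiv:2103.15791 — 10 statements merged into one kernel-verified Lean document; each statement's English description precedes it below -/
import Mathlib

section
/- Let ℓ : ℕ → ℚ be defined by ℓ_0 = 0, ℓ_1 = 1, and ℓ_{n+1} = 2^{1-n} Σ_{k=0}^{n} C(n,k) ℓ_k for n ≥ 1, and let ℓ̂_n := Σ_{k=0}^{n} (-1)^{n-k} C(n,k) ℓ_k be its binomial (Poisson) transform. Then for every integer n ≥ 2, ℓ̂_n = (-1)^{n+1} · Q_{n-2} · ( 1/Q_0 + 1/Q_1 + ⋯ + 1/Q_{n-2} ). -/
/-!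
With `S n := ∑ k, (-1)^k C(n,k) ℓ k` one has `ℓ̂ n = (-1)^n S n`. Pascal's rule gives
`S (n+1) = S n - S' n`, where `S'` is the same transform of the shifted sequence `k ↦ ℓ (k+1)`.
Substituting the recurrence for `ℓ (k+1)` and evaluating the resulting double binomial sum by
`∑_j C(n,j) x^j ∑_i C(j,i) a_i = ∑_i C(n,i) x^i (1+x)^(n-i) a_i` at `x = -1/2` gives
`S' n = 1 + 2^(1-n) S n`. Hence `S (m+3) = (1 - 2^(-(m+1))) S (m+2) - 1` with `S 2 = -1`, a
first-order linear recurrence whose coefficients multiply to `Q`, and whose solution is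
`S (m+2) = -Q m ∑_{j ≤ m} 1 / Q j`.
-/

/-- `Q m = ∏_{k=1}^{m} (1 - 2^{-k})`, with `Q 0 = 1`. -/
def Q (m : ℕ) : ℚ :=
  ∏ k ∈ Finset.range m, (1 - 1 / 2 ^ (k + 1))

open Finset

def altBinomialTransform {R : Type*} [CommRing R] (a : ℕ → R) (n : ℕ) : R :=
  ∑ k ∈ range (n + 1), (n.choose k : R) * ((-1) ^ k * a k)

section CommRing
variable {R : Type*} [CommRing R]

theorem altBinomialTransform_succ (a : ℕ → R) (n : ℕ) :
    altBinomialTransform a (n + 1) =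
      altBinomialTransform a n - altBinomialTransform (fun k => a (k + 1)) n := by
  rw [altBinomialTransform, sum_choose_succ_mul (fun i _ => (-1 : R) ^ i * a i),
    sub_eq_add_neg, altBinomialTransform, altBinomialTransform, ← sum_neg_distrib]
  congr 1
  refine sum_congr rfl fun k _ => ?_
  ring

theorem sum_neg_one_pow_sub_mul_choose (a : ℕ → R) (n : ℕ) :
    ∑ k ∈ range (n + 1), (-1 : R) ^ (n - k) * n.choose k * a k =
      (-1) ^ n * altBinomialTransform a n := by
  rw [altBinomialTransform, mul_sum]
  refine sum_congr rfl fun k hk => ?_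
  have hsign : (-1 : R) ^ (n - k) = (-1) ^ n * (-1) ^ k := by
    rw [← pow_sub_mul_pow (-1 : R) (mem_range_succ_iff.mp hk), mul_assoc, ← pow_add,
      Even.neg_one_pow ⟨k, rfl⟩, mul_one]
  rw [hsign]
  ring

end CommRing

theorem sum_choose_mul_pow_mul_sum_choose {R : Type*} [CommSemiring R] (x : R) (a : ℕ → R)
    (n : ℕ) :
    ∑ j ∈ range (n + 1),
        (n.choose j : R) * (x ^ j * ∑ i ∈ range (j + 1), (j.choose i : R) * a i) =
      ∑ i ∈ range (n + 1), (n.choose i : R) * (x ^ i * (1 + x) ^ (n - i) * a i) := by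
  simp_rw [mul_sum]
  rw [sum_comm' (t' := range (n + 1)) (s' := fun i => Ico i (n + 1)) (by
    intro j i; simp only [mem_range, mem_Ico]; omega)]
  refine sum_congr rfl fun i hi => ?_
  have hin : i ≤ n := mem_range_succ_iff.mp hi
  rw [sum_Ico_eq_sum_range, show n + 1 - i = n - i + 1 by omega, add_comm 1 x, add_pow, mul_sum,
    sum_mul, mul_sum]
  refine sum_congr rfl fun t _ => ?_
  have hchoose : (n.choose (i + t) : R) * ((i + t).choose i) = n.choose i * (n - i).choose t := by
    rw_mod_cast [Nat.choose_mul (Nat.le_add_right i t), Nat.add_sub_cancel_left]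
  calc _ = (n.choose (i + t) : R) * ((i + t).choose i) * (x ^ i * x ^ t * a i) := by ring
    _ = _ := by rw [hchoose, one_pow]; ring

theorem eq_mul_prod_mul_sum_one_div_prod {K : Type*} [Field K] {c u : ℕ → K} {b : K}
    (hc : ∀ k, c k ≠ 0) (h0 : u 0 = b) (hsucc : ∀ m, u (m + 1) = c m * u m + b) (m : ℕ) :
    u m = b * (∏ k ∈ range m, c k) * ∑ j ∈ range (m + 1), 1 / ∏ k ∈ range j, c k := by
  induction m with
  | zero => simp [h0]
  | succ m ih =>
    have hprod : ∏ k ∈ range m, c k ≠ 0 := prod_ne_zero_iff.mpr fun k _ => hc k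
    rw [hsucc, ih, sum_range_succ _ (m + 1), prod_range_succ _ m]
    field_simp [hc m]

theorem one_sub_one_div_two_pow_succ_ne_zero (k : ℕ) : (1 : ℚ) - 1 / 2 ^ (k + 1) ≠ 0 := by
  have : (1 : ℚ) < 2 ^ (k + 1) := one_lt_pow₀ one_lt_two k.succ_ne_zero
  rw [sub_ne_zero, ne_comm, ne_eq, div_eq_one_iff_eq (by positivity)]
  exact this.ne

section Recurrence
variable {ℓ : ℕ → ℚ} (h0 : ℓ 0 = 0) (h1 : ℓ 1 = 1)
  (hrec : ∀ n : ℕ, 1 ≤ n →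
      ℓ (n + 1) = (2 : ℚ) ^ ((1 : ℤ) - (n : ℤ)) *
        ∑ k ∈ Finset.range (n + 1), (n.choose k : ℚ) * ℓ k)
include h0 h1 hrec

-- The indicator corrects for `j = 0`, where the recurrence would give `ℓ 1 = 2 ℓ 0 = 0`.
theorem neg_one_pow_mul_apply_succ (j : ℕ) :
    (-1) ^ j * ℓ (j + 1) =
      2 * ((-1 / 2) ^ j * ∑ i ∈ range (j + 1), (j.choose i : ℚ) * ℓ i) +
        if j = 0 then 1 else 0 := by
  rcases j with _ | j
  · simp [h0, h1]
  · rw [hrec (j + 1) (by omega), zpow_sub₀ two_ne_zero, zpow_one, zpow_natCast,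
      if_neg j.succ_ne_zero, div_pow]
    ring

theorem altBinomialTransform_shift (n : ℕ) :
    altBinomialTransform (fun k => ℓ (k + 1)) n =
      2 * (1 / 2) ^ n * altBinomialTransform ℓ n + 1 := by
  unfold altBinomialTransform
  simp_rw [neg_one_pow_mul_apply_succ h0 h1 hrec]
  calc _ = 2 * ∑ j ∈ range (n + 1), (n.choose j : ℚ) *
          ((-1 / 2) ^ j * ∑ i ∈ range (j + 1), (j.choose i : ℚ) * ℓ i) +
        ∑ j ∈ range (n + 1), (n.choose j : ℚ) * if j = 0 then 1 else 0 := by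
        rw [mul_sum, ← sum_add_distrib]
        refine sum_congr rfl fun j _ => ?_
        ring
    _ = 2 * ∑ i ∈ range (n + 1),
          (n.choose i : ℚ) * ((-1 / 2) ^ i * (1 / 2) ^ (n - i) * ℓ i) + 1 := by
        rw [sum_choose_mul_pow_mul_sum_choose, show (1 : ℚ) + -1 / 2 = 1 / 2 by norm_num]
        simp
    _ = _ := by
        rw [mul_assoc, mul_sum _ _ ((1 / 2 : ℚ) ^ n)]
        congr 2
        refine sum_congr rfl fun i hi => ?_
        rw [div_eq_mul_one_div (-1 : ℚ), mul_pow, mul_assoc ((-1) ^ i),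
          pow_mul_pow_sub _ (mem_range_succ_iff.mp hi)]
        ring

theorem altBinomialTransform_succ_succ (n : ℕ) :
    altBinomialTransform ℓ (n + 2) = (1 - 1 / 2 ^ n) * altBinomialTransform ℓ (n + 1) - 1 := by
  rw [altBinomialTransform_succ, altBinomialTransform_shift h0 h1 hrec, one_div_pow]
  ring

end Recurrence

/-- If `ℓ 0 = 0`, `ℓ 1 = 1`, and
`ℓ (n+1) = 2^{1-n} Σ_{k=0}^{n} C(n,k) ℓ k` for `n ≥ 1`, then the binomial (Poisson)
transform `ℓ̂ n = Σ_{k=0}^{n} (-1)^{n-k} C(n,k) ℓ k` satisfies, for every `n ≥ 2`,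
`ℓ̂ n = (-1)^{n+1} Q_{n-2} (1/Q_0 + ⋯ + 1/Q_{n-2})`. -/
theorem poisson_transform_endnodes
    (ℓ : ℕ → ℚ) (h0 : ℓ 0 = 0) (h1 : ℓ 1 = 1)
    (hrec : ∀ n : ℕ, 1 ≤ n →
      ℓ (n + 1) = (2 : ℚ) ^ ((1 : ℤ) - (n : ℤ)) *
        ∑ k ∈ Finset.range (n + 1), (n.choose k : ℚ) * ℓ k) :
    ∀ n : ℕ, 2 ≤ n →
      (∑ k ∈ Finset.range (n + 1), (-1 : ℚ) ^ (n - k) * (n.choose k : ℚ) * ℓ k) =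
        (-1 : ℚ) ^ (n + 1) * Q (n - 2) * ∑ j ∈ Finset.range (n - 1), 1 / Q j := by
  intro n hn
  obtain ⟨m, rfl⟩ : ∃ m, n = m + 2 := ⟨n - 2, by omega⟩
  have hbase : altBinomialTransform ℓ 2 = -1 := by
    simpa using altBinomialTransform_succ_succ h0 h1 hrec 0
  have hsol := eq_mul_prod_mul_sum_one_div_prod (u := fun m => altBinomialTransform ℓ (m + 2))
    one_sub_one_div_two_pow_succ_ne_zero hbase
    (fun m => (altBinomialTransform_succ_succ h0 h1 hrec (m + 1)).trans (sub_eq_add_neg _ _)) m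
  rw [sum_neg_one_pow_sub_mul_choose, hsol, Nat.add_sub_cancel, show m + 2 - 1 = m + 1 by omega]
  unfold Q
  ring
end

section
/- Let ℓ : ℕ → ℚ be defined by ℓ_0 = 0, ℓ_1 = 1, and ℓ_{n+1} = 2^{1-n} Σ_{k=0}^{n} C(n,k) ℓ_k for n ≥ 1. Then for every integer n ≥ 0, ℓ_n = n - Σ_{k=2}^{n} C(n,k) (-1)^k R_{k-2}, where R_m := Q_m · ( 1/Q_0 + 1/Q_1 + ⋯ + 1/Q_m ). -/
/-- `R m = Q m · (1/Q_0 + 1/Q_1 + ⋯ + 1/Q_m)`. -/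
def R (m : ℕ) : ℚ :=
  Q m * ∑ j ∈ Finset.range (m + 1), 1 / Q j

open Finset

lemma Q_pos (m : ℕ) : 0 < Q m := by
  refine prod_pos fun k _ => ?_
  have : (1 : ℚ) / 2 ^ (k + 1) < 1 := by
    rw [div_lt_one (by positivity)]
    exact one_lt_pow₀ (by norm_num) (by omega)
  linarith

lemma R_zero : R 0 = 1 := by simp [R, Q]

lemma R_succ (m : ℕ) : R (m + 1) = (1 - 1 / 2 ^ (m + 1)) * R m + 1 := by
  have hQ : Q (m + 1) = Q m * (1 - 1 / 2 ^ (m + 1)) := prod_range_succ _ _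
  rw [R, sum_range_succ, mul_add, mul_one_div, div_self (Q_pos _).ne', R, hQ]
  ring

theorem Nat.sum_range_choose_mul_choose {n j : ℕ} (hj : j ≤ n) :
    ∑ k ∈ range (n + 1), n.choose k * k.choose j = n.choose j * 2 ^ (n - j) := by
  rw [range_eq_Ico, ← sum_Ico_consecutive _ (Nat.zero_le j) (by omega : j ≤ n + 1)]
  have below : ∑ k ∈ Ico 0 j, n.choose k * k.choose j = 0 :=
    sum_eq_zero fun k hk => by simp [Nat.choose_eq_zero_of_lt (mem_Ico.mp hk).2]
  have above : ∀ i ∈ range (n + 1 - j),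
      n.choose (j + i) * (j + i).choose j = n.choose j * (n - j).choose i := fun i _ => by
    rw [Nat.choose_mul (Nat.le_add_right j i), Nat.add_sub_cancel_left]
  rw [below, zero_add, sum_Ico_eq_sum_range, sum_congr rfl above, ← mul_sum,
    show n + 1 - j = n - j + 1 by omega, Nat.sum_range_choose]

theorem sum_choose_mul_sum_choose_mul {S : Type*} [CommSemiring S] (a : ℕ → S) (n : ℕ) :
    ∑ k ∈ range (n + 1), (n.choose k : S) * ∑ j ∈ range (k + 1), (k.choose j : S) * a j
      = ∑ j ∈ range (n + 1), (n.choose j : S) * 2 ^ (n - j) * a j := by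
  have extend : ∀ k ∈ range (n + 1), ∑ j ∈ range (k + 1), (k.choose j : S) * a j
      = ∑ j ∈ range (n + 1), (k.choose j : S) * a j := fun k hk => by
    refine sum_subset (range_subset_range.mpr (by simpa using hk)) fun j _ hj => ?_
    rw [Nat.choose_eq_zero_of_lt (by simpa using hj), Nat.cast_zero, zero_mul]
  calc _ = ∑ j ∈ range (n + 1),
          (∑ k ∈ range (n + 1), ((n.choose k * k.choose j : ℕ) : S)) * a j := by
        rw [sum_congr rfl fun k hk => by rw [extend k hk]]
        simp_rw [mul_sum, sum_mul]
        rw [sum_comm]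
        push_cast
        simp_rw [mul_assoc]
    _ = _ := by
        refine sum_congr rfl fun j hj => ?_
        rw [← Nat.cast_sum, Nat.sum_range_choose_mul_choose (by simpa [Nat.lt_succ_iff] using hj)]
        push_cast
        rfl

def endnodeCoeff : ℕ → ℚ
  | 0 => 0
  | j + 1 => (2 / 2 ^ j - 1) * endnodeCoeff j + (-1) ^ j

lemma endnodeCoeff_add_two (m : ℕ) : endnodeCoeff (m + 2) = -(-1) ^ m * R m := by
  induction m with
  | zero => simp [endnodeCoeff, R_zero]
  | succ m ih =>
    rw [endnodeCoeff, ih, R_succ]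
    field_simp
    ring

def endnodeSeq (n : ℕ) : ℚ :=
  ∑ j ∈ range (n + 1), (n.choose j : ℚ) * endnodeCoeff j

lemma endnodeSeq_succ {n : ℕ} (hn : n ≠ 0) :
    endnodeSeq (n + 1) = (2 : ℚ) ^ ((1 : ℤ) - (n : ℤ)) *
      ∑ k ∈ range (n + 1), (n.choose k : ℚ) * endnodeSeq k := by
  have alternating : ∑ j ∈ range (n + 1), (n.choose j : ℚ) * (-1) ^ j = 0 := by
    have := add_pow (-1 : ℚ) 1 n
    simp_all [mul_comm, zero_pow hn]
  have weight : ∀ j ∈ range (n + 1),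
      (2 : ℚ) ^ ((1 : ℤ) - (n : ℤ)) * ((n.choose j : ℚ) * 2 ^ (n - j) * endnodeCoeff j)
        = (n.choose j : ℚ) * (2 / 2 ^ j * endnodeCoeff j) := fun j hj => by
    have hpow : (2 : ℚ) ^ n = 2 ^ (n - j) * 2 ^ j := by
      rw [← pow_add, Nat.sub_add_cancel (by simpa [Nat.lt_succ_iff] using hj)]
    rw [zpow_sub₀ two_ne_zero, zpow_one, zpow_natCast, hpow]
    field_simp
  calc endnodeSeq (n + 1)
      = ∑ j ∈ range (n + 1), (n.choose j : ℚ) * (endnodeCoeff j + endnodeCoeff (j + 1)) := by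
        rw [endnodeSeq, sum_choose_succ_mul (fun j _ => endnodeCoeff j), ← sum_add_distrib]
        simp_rw [mul_add]
    _ = ∑ j ∈ range (n + 1), (n.choose j : ℚ) * (2 / 2 ^ j * endnodeCoeff j)
          + ∑ j ∈ range (n + 1), (n.choose j : ℚ) * (-1) ^ j := by
        rw [← sum_add_distrib]
        refine sum_congr rfl fun j _ => ?_
        rw [endnodeCoeff]
        ring
    _ = _ := by
        rw [alternating, add_zero]
        unfold endnodeSeq
        rw [sum_choose_mul_sum_choose_mul, mul_sum, sum_congr rfl weight]

lemma endnodeSeq_eq (n : ℕ) :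
    endnodeSeq n = n - ∑ k ∈ Icc 2 n, (n.choose k : ℚ) * (-1) ^ k * R (k - 2) := by
  rcases n with _ | m
  · simp [endnodeSeq, endnodeCoeff]
  have tail : ∀ k ∈ Icc 2 (m + 1), ((m + 1).choose k : ℚ) * endnodeCoeff k
      = -(((m + 1).choose k : ℚ) * (-1) ^ k * R (k - 2)) := fun k hk => by
    obtain ⟨i, rfl⟩ := Nat.exists_eq_add_of_le' (mem_Icc.mp hk).1
    rw [endnodeCoeff_add_two, Nat.add_sub_cancel]
    ring
  rw [endnodeSeq, range_eq_Ico, ← sum_Ico_consecutive _ (Nat.zero_le 2) (by omega),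
    Ico_add_one_right_eq_Icc, sum_congr rfl tail, sum_neg_distrib]
  simp [endnodeCoeff, sum_range_succ, sub_eq_add_neg]

/-- If `ℓ 0 = 0`, `ℓ 1 = 1`, and
`ℓ (n+1) = 2^{1-n} Σ_{k=0}^{n} C(n,k) ℓ k` for `n ≥ 1`, then for every `n ≥ 0`,
`ℓ n = n - Σ_{k=2}^{n} C(n,k) (-1)^k R_{k-2}`. -/
theorem endnodes_explicit
    (ℓ : ℕ → ℚ) (h0 : ℓ 0 = 0) (h1 : ℓ 1 = 1)
    (hrec : ∀ n : ℕ, 1 ≤ n →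
      ℓ (n + 1) = (2 : ℚ) ^ ((1 : ℤ) - (n : ℤ)) *
        ∑ k ∈ Finset.range (n + 1), (n.choose k : ℚ) * ℓ k) :
    ∀ n : ℕ,
      ℓ n = (n : ℚ) -
        ∑ k ∈ Finset.Icc 2 n, (n.choose k : ℚ) * (-1 : ℚ) ^ k * R (k - 2) := by
  suffices ∀ n, ℓ n = endnodeSeq n from fun n => (this n).trans (endnodeSeq_eq n)
  intro n
  induction n using Nat.strong_induction_on with
  | _ n ih =>
    rcases n with _ | _ | m
    · simp [h0, endnodeSeq, endnodeCoeff]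
    · simp [h1, endnodeSeq, endnodeCoeff, sum_range_succ]
    · rw [hrec (m + 1) (by omega), endnodeSeq_succ (by omega)]
      congr 1
      exact sum_congr rfl fun k hk => by rw [ih k (by simp at hk; omega)]
end

section
/- Fix integers n ≥ 0 and k ≥ 1. Let μ be the product measure on (Fin n → ℕ) of n copies of the geometric distribution on ℕ assigning probability 2^{-(i+1)} to the value i. Then the probability that every urn 0, 1, …, k-1 is hit, i.e. μ({ x : Fin n → ℕ | ∀ i < k, ∃ m, x m = i }), equals Σ_{j=0}^{2^k - 1} (-1)^{ν(j)} (1 - j/2^k)^n, where ν(j) denotes the number of ones in the binary representation of j. -/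
/-
Inclusion–exclusion over the set `S ⊆ {0, …, k-1}` of missed urns gives
`∑_S (-1)^|S| (1 - geom(S))^n`, since `n` independent samples all avoid `S` with probability
`(1 - geom(S))^n`. After relabelling urn `i` as `k - 1 - i`, the mass `geom(S)` is the binary
fraction `j / 2^k` with `j = ∑_{i ∈ S} 2^i`, and `S ↦ j` is a bijection from subsets of
`{0, …, k-1}` onto `{0, …, 2^k - 1}` with `|S| = ν(j)`.
-/

open MeasureTheory

/-- The geometric distribution on `ℕ` assigning probability `2^{-(i+1)}` to `i`,
as a measure on `ℕ`. -/
noncomputable def geomMeasure : Measure ℕ :=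
  Measure.sum (fun i : ℕ => ((2 : ENNReal) ^ (i + 1))⁻¹ • Measure.dirac i)

open Finset

theorem measureReal_biInter_compl_eq_sum_powerset {Ω ι : Type*} [MeasurableSpace Ω]
    (μ : Measure Ω) [IsFiniteMeasure μ] {t : Finset ι} {s : ι → Set Ω}
    (hs : ∀ i ∈ t, MeasurableSet (s i)) :
    μ.real (⋂ i ∈ t, (s i)ᶜ) = ∑ u ∈ t.powerset, (-1 : ℝ) ^ #u * μ.real (⋂ i ∈ u, s i) := by
  classical
  have hU : MeasurableSet (⋃ i ∈ t, s i) := t.measurableSet_biUnion hs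
  rw [← Set.compl_iUnion₂, measureReal_compl hU, measureReal_biUnion_eq_sum_powerset hs,
    ← sum_filter_add_sum_filter_not t.powerset Finset.Nonempty]
  have hempty : {u ∈ t.powerset | ¬u.Nonempty} = {∅} := by
    ext u; simp only [mem_filter, mem_powerset, not_nonempty_iff_eq_empty, mem_singleton]
    exact ⟨And.right, fun hu => ⟨hu ▸ empty_subset t, hu⟩⟩
  rw [hempty, sum_singleton, add_comm]
  simp [pow_succ, sum_neg_distrib]

theorem measureReal_pi_setOf_forall_mem {ι α : Type*} [Fintype ι] [MeasurableSpace α]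
    (μ : Measure α) [SigmaFinite μ] (s : Set α) :
    (Measure.pi fun _ : ι => μ).real {x | ∀ m, x m ∈ s} = μ.real s ^ Fintype.card ι := by
  have : {x : ι → α | ∀ m, x m ∈ s} = Set.univ.pi fun _ => s := by ext; simp
  simp [this, measureReal_def, Measure.pi_pi]

theorem geomMeasure_singleton (i : ℕ) : geomMeasure {i} = ((2 : ENNReal) ^ (i + 1))⁻¹ := by
  simp [geomMeasure, Measure.sum_apply, Pi.single_apply]

instance : IsProbabilityMeasure geomMeasure := by
  constructor
  have h : ∀ i : ℕ, ((2 : ENNReal) ^ (i + 1))⁻¹ = 2⁻¹ * 2⁻¹ ^ i := fun i => by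
    rw [ENNReal.inv_pow, pow_succ']
  simp only [geomMeasure, Measure.sum_apply _ MeasurableSet.univ, Measure.smul_apply,
    measure_univ, smul_eq_mul, mul_one, h, ENNReal.tsum_mul_left, ENNReal.tsum_geometric_two]
  exact ENNReal.inv_mul_cancel two_ne_zero ENNReal.ofNat_ne_top

theorem geomMeasure_real_finset (T : Finset ℕ) :
    geomMeasure.real T = ∑ i ∈ T, ((2 : ℝ) ^ (i + 1))⁻¹ := by
  rw [measureReal_def, ← sum_measure_singleton, ENNReal.toReal_sum] <;>
    simp [geomMeasure_singleton]

theorem geomMeasure_real_image_reflect {k : ℕ} {T : Finset ℕ} (hT : T ⊆ range k) :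
    geomMeasure.real (T.image (k - 1 - ·)) = (∑ i ∈ T, 2 ^ i : ℕ) / 2 ^ k := by
  have hinj : Set.InjOn (k - 1 - ·) T := fun a ha b hb hab => by
    have := mem_range.1 (hT ha); have := mem_range.1 (hT hb); simp only at hab; omega
  rw [geomMeasure_real_finset, sum_image hinj, Nat.cast_sum, sum_div]
  refine sum_congr rfl fun i hi => ?_
  have hi : i < k := mem_range.1 (hT hi)
  rw [inv_eq_one_div, div_eq_div_iff (by positivity) (by positivity)]
  push_cast
  rw [one_mul, ← pow_add]; congr 1; omega

theorem digits_two_sum_eq_length_bitIndices (n : ℕ) :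
    (Nat.digits 2 n).sum = n.bitIndices.length := by
  induction n using Nat.evenOddRec with
  | h0 => simp
  | h_even n ih =>
    rcases n.eq_zero_or_pos with rfl | hn
    · simp
    · rw [Nat.digits_def' (by norm_num) (by omega), Nat.bitIndices_two_mul]
      simp [ih]
  | h_odd n ih =>
    rw [Nat.digits_def' (by norm_num) (by omega), Nat.bitIndices_two_mul_add_one]
    simp [ih, Nat.mul_add_div]
    omega

theorem digits_two_sum_sum_two_pow (T : Finset ℕ) :
    (Nat.digits 2 (∑ i ∈ T, 2 ^ i)).sum = #T := by
  rw [digits_two_sum_eq_length_bitIndices, ← List.toFinset_card_of_nodup Nat.bitIndices_nodup,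
    toFinset_bitIndices_sum_two_pow]

theorem sum_powerset_range_eq_sum_range_two_pow {M : Type*} [AddCommMonoid M] (k : ℕ)
    (f : ℕ → M) : ∑ T ∈ (range k).powerset, f (∑ i ∈ T, 2 ^ i) = ∑ j ∈ range (2 ^ k), f j := by
  refine sum_equiv equivBitIndices.symm (fun T => ?_) (fun _ _ => rfl)
  simp only [mem_powerset, equivBitIndices_symm_apply, mem_range]
  constructor
  · exact fun hT => Nat.geomSum_lt le_rfl fun i hi => mem_range.1 (hT hi)
  · intro h i hi
    exact mem_range.2 ((Nat.pow_lt_pow_iff_right (by norm_num)).1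
      ((single_le_sum (fun _ _ => Nat.zero_le _) hi).trans_lt h))

theorem probabilistic_counting_general (n k : ℕ) :
    ((Measure.pi (fun _ : Fin n => geomMeasure))
        {x : Fin n → ℕ | ∀ i < k, ∃ m : Fin n, x m = i}).toReal =
      ∑ j ∈ Finset.range (2 ^ k),
        (-1 : ℝ) ^ ((Nat.digits 2 j).sum) * (1 - (j : ℝ) / 2 ^ k) ^ n := by
  set A : ℕ → Set (Fin n → ℕ) := fun i => {x | ∀ m, x m ≠ k - 1 - i}
  have hit : {x : Fin n → ℕ | ∀ i < k, ∃ m, x m = i} = ⋂ i ∈ range k, (A i)ᶜ := by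
    ext x
    simp only [A, Set.mem_ofPred_eq, Set.mem_iInter, Set.mem_compl_iff, mem_range, not_forall,
      not_not]
    refine ⟨fun h i hi => h _ (by omega), fun h i hi => ?_⟩
    simpa [show k - 1 - (k - 1 - i) = i by omega] using h (k - 1 - i) (by omega)
  have miss (T : Finset ℕ) (hT : T ⊆ range k) :
      (Measure.pi fun _ : Fin n => geomMeasure).real (⋂ i ∈ T, A i) =
        (1 - ((∑ i ∈ T, 2 ^ i : ℕ) : ℝ) / 2 ^ k) ^ n := by
    have : ⋂ i ∈ T, A i = {x | ∀ m, x m ∈ ((T.image (k - 1 - ·) : Finset ℕ) : Set ℕ)ᶜ} := by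
      ext x
      simp only [A, Set.mem_iInter, Set.mem_ofPred_eq, Set.mem_compl_iff, coe_image,
        Set.mem_image, mem_coe, not_exists, not_and]
      exact ⟨fun h m i hi e => h i hi m e.symm, fun h i hi m e => h m i hi e.symm⟩
    rw [this, measureReal_pi_setOf_forall_mem, probReal_compl_eq_one_sub (.of_discrete),
      geomMeasure_real_image_reflect hT, Fintype.card_fin]
  rw [← measureReal_def, hit, measureReal_biInter_compl_eq_sum_powerset _ fun _ _ => .of_discrete,
    ← sum_powerset_range_eq_sum_range_two_pow]
  refine sum_congr rfl fun T hT => ?_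
  rw [miss T (mem_powerset.1 hT), digits_two_sum_sum_two_pow]

/-- For `n ≥ 0` samples from the geometric distribution with
parameter 1/2 (independent, i.e. the product measure on `Fin n → ℕ`), and `k ≥ 1`,
the probability that each value `0, 1, …, k-1` occurs at least once equals
`Σ_{j=0}^{2^k - 1} (-1)^{ν(j)} (1 - j/2^k)^n`, where `ν(j)` is the number of ones
in the binary representation of `j`. -/
theorem probabilistic_counting (n k : ℕ) (hk : 1 ≤ k) :
    ((Measure.pi (fun _ : Fin n => geomMeasure))
        {x : Fin n → ℕ | ∀ i < k, ∃ m : Fin n, x m = i}).toReal =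
      ∑ j ∈ Finset.range (2 ^ k),
        (-1 : ℝ) ^ ((Nat.digits 2 j).sum) * (1 - (j : ℝ) / 2 ^ k) ^ n :=
  probabilistic_counting_general n k
end

section
/- For every real number q with 0 ≤ q < 1, the infinite product ∏_{j=0}^{∞} (1 - q^{2^j}) converges and equals the convergent series Σ_{j=0}^{∞} (-1)^{ν(j)} q^j, where ν(j) denotes the number of ones in the binary representation of j. -/
/-!
Expanding `∏_{i<n} (1 - q^{2^i})` picks from each factor either `1` or `-q^{2^i}`; by uniqueness
of binary expansions this produces every monomial `q^j` with `j < 2^n` exactly once, with sign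
`(-1)^{ν(j)}`. Hence the `n`-th partial product is the `2^n`-th partial sum of the series, and both
limits exist because the terms are dominated by a geometric series.
-/

open Finset

theorem Nat.digits_sum_two_pow_add {n j : ℕ} (hj : j < 2 ^ n) :
    (Nat.digits 2 (2 ^ n + j)).sum = (Nat.digits 2 j).sum + 1 := by
  have hlen : (Nat.digits 2 j).length ≤ n := (Nat.digits_length_le_iff one_lt_two j).mpr hj
  have h := Nat.digits_append_zeroes_append_digits (k := n - (Nat.digits 2 j).length)
    (n := j) (m := 1) one_lt_two one_pos
  rw [Nat.add_sub_cancel' hlen, mul_one, add_comm] at h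
  rw [← h]
  simp

theorem prod_range_one_sub_pow_two_pow {R : Type*} [CommRing R] (x : R) (n : ℕ) :
    ∏ i ∈ range n, (1 - x ^ 2 ^ i) =
      ∑ j ∈ range (2 ^ n), (-1 : R) ^ (Nat.digits 2 j).sum * x ^ j := by
  induction n with
  | zero => simp
  | succ n ih =>
    have hupper : ∀ j ∈ range (2 ^ n),
        (-1 : R) ^ (Nat.digits 2 (2 ^ n + j)).sum * x ^ (2 ^ n + j) =
          -x ^ 2 ^ n * ((-1) ^ (Nat.digits 2 j).sum * x ^ j) := fun j hj => by
      rw [Nat.digits_sum_two_pow_add (mem_range.mp hj), pow_succ, pow_add]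
      ring
    rw [prod_range_succ, ih, pow_succ, mul_two, sum_range_add, sum_congr rfl hupper,
      ← mul_sum]
    ring

theorem summable_pow_two_pow {q : ℝ} (hq0 : 0 ≤ q) (hq1 : q < 1) :
    Summable fun j : ℕ => q ^ 2 ^ j :=
  (summable_geometric_of_lt_one hq0 hq1).comp_injective (Nat.pow_right_injective le_rfl)

/-- For every real `q` with `0 ≤ q < 1`, the infinite product
`∏_{j≥0} (1 - q^{2^j})` converges and equals the convergent series
`Σ_{j≥0} (-1)^{ν(j)} q^j`, where `ν(j)` is the number of ones in the binary
representation of `j` (Prouhet–Thue–Morse). -/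
theorem thue_morse_product (q : ℝ) (hq0 : 0 ≤ q) (hq1 : q < 1) :
    Multipliable (fun j : ℕ => 1 - q ^ (2 ^ j)) ∧
    Summable (fun j : ℕ => (-1 : ℝ) ^ ((Nat.digits 2 j).sum) * q ^ j) ∧
    (∏' j : ℕ, (1 - q ^ (2 ^ j))) =
      ∑' j : ℕ, (-1 : ℝ) ^ ((Nat.digits 2 j).sum) * q ^ j := by
  have hprod : Multipliable fun j : ℕ => 1 - q ^ 2 ^ j := by
    simpa [sub_eq_add_neg] using
      Real.multipliable_one_add_of_summable (summable_pow_two_pow hq0 hq1).neg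
  have hsum : Summable fun j : ℕ => (-1 : ℝ) ^ (Nat.digits 2 j).sum * q ^ j :=
    (summable_geometric_of_lt_one hq0 hq1).of_norm_bounded fun j => by
      simp [abs_of_nonneg hq0]
  refine ⟨hprod, hsum, tendsto_nhds_unique (f := fun n => ∏ i ∈ range n, (1 - q ^ 2 ^ i))
    hprod.hasProd.tendsto_prod_nat ?_⟩
  simp_rw [prod_range_one_sub_pow_two_pow]
  exact hsum.hasSum.tendsto_sum_nat.comp (tendsto_pow_atTop_atTop_of_one_lt one_lt_two)
end

section
/- For every integer n ≥ 1, the following identity of formal power series over ℚ holds: Σ_{m=0}^{∞} ( Σ_{k=1}^{n} C(n,k) (-1)^{k-1} / k^m ) z^m = exp( Σ_{j=1}^{∞} (H_n^{(j)}/j) z^j ), where exp applied to a formal power series g with zero constant term means substituting g into the exponential series Σ_{r≥0} z^r/r!. -/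
/-- The formal power series `Σ_{j≥1} (H_n^{(j)}/j) z^j` over `ℚ`, where
`H_n^{(j)} = Σ_{k=1}^{n} 1/k^j` is the generalized harmonic number. -/
noncomputable def harmonicLogSeries (n : ℕ) : PowerSeries ℚ :=
  PowerSeries.mk fun j =>
    if j = 0 then 0 else (∑ k ∈ Finset.Icc 1 n, (1 : ℚ) / (k : ℚ) ^ j) / j

/-!
Partial fractions: `Σ_k C(n,k) (-1)^(k-1) / (1 - z/k) = ∏_{k=1}^n 1 / (1 - z/k)`, proved by
induction on `n` after multiplying by `1 - z/(n+1)`. The logarithmic derivative of the product is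
`Σ_k (1/k) / (1 - z/k)`, which is the derivative `g'` of the harmonic series `g`. So both sides
solve `F' = F g'` with `F(0) = 1`, whose formal power series solution is unique; the right-hand
side is `exp ∘ g` written out coefficientwise.
-/

open PowerSeries Finset Nat

theorem Derivation.map_prod_of_forall_eq_mul {R A ι : Type*} [CommSemiring R] [CommSemiring A]
    [Algebra R A] (D : Derivation R A A) (s : Finset ι) {f h : ι → A}
    (hf : ∀ i ∈ s, D (f i) = f i * h i) :
    D (∏ i ∈ s, f i) = (∏ i ∈ s, f i) * ∑ i ∈ s, h i := by
  classical
  induction s using Finset.induction with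
  | empty => simp
  | insert a s ha ih =>
    rw [prod_insert ha, sum_insert ha, D.leibniz, smul_eq_mul, smul_eq_mul,
      ih fun i hi => hf i (mem_insert_of_mem hi), hf a (mem_insert_self a s)]
    ring

theorem Finset.sum_Icc_choose_mul_neg_one_pow {R : Type*} [CommRing R] {n : ℕ} (hn : n ≠ 0) :
    ∑ k ∈ Icc 1 n, (n.choose k : R) * (-1) ^ (k - 1) = 1 := by
  have h := congrArg (Int.cast : ℤ → R) (Int.alternating_sum_range_choose_of_ne hn)
  push_cast at h
  rw [range_succ_eq_Icc_zero, ← insert_Icc_add_one_left_eq_Icc (zero_le n),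
    sum_insert (by simp)] at h
  calc ∑ k ∈ Icc 1 n, (n.choose k : R) * (-1) ^ (k - 1)
      = -∑ k ∈ Icc 1 n, (-1) ^ k * (n.choose k : R) := by
        rw [← sum_neg_distrib]
        refine sum_congr rfl fun k hk => ?_
        obtain ⟨j, rfl⟩ := exists_add_one_eq.mpr (mem_Icc.mp hk).1
        rw [add_tsub_cancel_right, pow_succ]
        ring
    _ = 1 := by simpa [neg_eq_iff_eq_neg, add_eq_zero_iff_neg_eq'] using h

namespace PowerSeries

variable {R : Type*} [CommRing R]

noncomputable def geom (a : R) : R⟦X⟧ := mk fun m => a ^ m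

@[simp]
theorem constantCoeff_geom (a : R) : constantCoeff (geom a) = 1 := by
  simp [geom, ← coeff_zero_eq_constantCoeff_apply]

theorem geom_mul_one_sub (a : R) : geom a * (1 - C a * X) = 1 := by
  have h : geom a = rescale a (mk 1) := by ext; simp [geom]
  rw [h, ← rescale_X, ← map_one (rescale a), ← map_sub, ← map_mul,
    mk_one_mul_one_sub_eq_one]

theorem derivative_geom (a : R) : d⁄dX R (geom a) = geom a * (C a * geom a) := by
  ext m
  rw [coeff_derivative, mul_left_comm, coeff_C_mul, coeff_mul]
  simp only [geom, coeff_mk, ← pow_add]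
  rw [sum_congr rfl fun p hp => by rw [mem_antidiagonal.mp hp], sum_const,
    Nat.card_antidiagonal, nsmul_eq_mul]
  push_cast
  ring

theorem coeff_succ_mul_one_sub_C_mul_X (f : R⟦X⟧) (a : R) (m : ℕ) :
    coeff (m + 1) (f * (1 - C a * X)) = coeff (m + 1) f - a * coeff m f := by
  rw [mul_sub, mul_one, map_sub, mul_left_comm, coeff_C_mul, coeff_succ_mul_X]

theorem eq_of_derivative_eq_mul [IsAddTorsionFree R] {F G h : R⟦X⟧}
    (hF : d⁄dX R F = F * h) (hG : d⁄dX R G = G * h)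
    (h0 : constantCoeff F = constantCoeff G) : F = G := by
  ext m
  induction m using Nat.strong_induction_on with
  | _ m ih =>
    cases m with
    | zero => simpa using h0
    | succ j =>
      have hlow : coeff j (F * h) = coeff j (G * h) := by
        rw [coeff_mul, coeff_mul]
        refine sum_congr rfl fun p hp => ?_
        rw [ih p.1 (by have := mem_antidiagonal.mp hp; omega)]
      rw [← hF, ← hG, coeff_derivative, coeff_derivative] at hlow
      exact nsmul_right_injective (succ_ne_zero j) (by simpa [nsmul_eq_mul, mul_comm] using hlow)

section Field

variable {K : Type*} [Field K] [Algebra ℚ K]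

theorem coeff_subst_exp {g : K⟦X⟧} (hg : constantCoeff g = 0) (m : ℕ) :
    coeff m ((exp K).subst g) = ∑ r ∈ range (m + 1), coeff m (g ^ r) / r ! := by
  have hvanish (r : ℕ) (hr : m < r) : coeff m (g ^ r) = 0 :=
    X_pow_dvd_iff.mp (pow_dvd_pow_of_dvd (X_dvd_iff.mpr hg) r) m hr
  rw [coeff_subst' (HasSubst.of_constantCoeff_zero' hg),
    finsum_eq_sum_of_support_subset (s := range (m + 1))]
  · simp [div_eq_inv_mul]
  · intro r hr
    by_contra hmr
    exact hr (by simp [hvanish r (by simpa using hmr)])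

theorem constantCoeff_subst_exp {g : K⟦X⟧} (hg : constantCoeff g = 0) :
    constantCoeff ((exp K).subst g) = 1 := by
  rw [← coeff_zero_eq_constantCoeff_apply, coeff_subst_exp hg]
  simp

end Field

theorem derivative_subst_exp {A : Type*} [CommRing A] [Algebra ℚ A] {g : A⟦X⟧}
    (hg : constantCoeff g = 0) : d⁄dX A ((exp A).subst g) = (exp A).subst g * d⁄dX A g := by
  rw [derivative_subst (HasSubst.of_constantCoeff_zero' hg), derivative_exp]

end PowerSeries

section AlternatingChoose

variable (K : Type*) [Field K] [CharZero K]

noncomputable def alternatingChooseSeries (n : ℕ) : K⟦X⟧ :=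
  mk fun m => ∑ k ∈ Icc 1 n, (n.choose k : K) * (-1) ^ (k - 1) / (k : K) ^ m

variable {K}

theorem alternatingChooseSeries_succ_mul {n : ℕ} (hn : n ≠ 0) :
    alternatingChooseSeries K (n + 1) * (1 - C (1 / ((n + 1 : ℕ) : K)) * X) =
      alternatingChooseSeries K n := by
  ext m
  cases m with
  | zero =>
    simp [alternatingChooseSeries, sum_Icc_choose_mul_neg_one_pow hn,
      sum_Icc_choose_mul_neg_one_pow (succ_ne_zero n)]
  | succ m =>
    rw [coeff_succ_mul_one_sub_C_mul_X]
    simp only [alternatingChooseSeries, coeff_mk, mul_sum, ← sum_sub_distrib]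
    calc ∑ k ∈ Icc 1 (n + 1), _
        = ∑ k ∈ Icc 1 (n + 1), (n.choose k : K) * (-1) ^ (k - 1) / (k : K) ^ (m + 1) := by
          refine sum_congr rfl fun k hk => ?_
          obtain ⟨hk1, hkn⟩ := mem_Icc.mp hk
          have hk0 : (k : K) ≠ 0 := by exact_mod_cast (by omega : k ≠ 0)
          have hch : (n.choose k : K) * (n + 1) = ((n + 1).choose k) * (n + 1 - k) := by
            have h := congrArg (Nat.cast : ℕ → K) (choose_mul_succ_eq n k)
            push_cast [Nat.cast_sub hkn] at h
            exact h
          push_cast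
          field_simp
          linear_combination (-(k : K) ^ m) * hch
      _ = ∑ k ∈ Icc 1 n, (n.choose k : K) * (-1) ^ (k - 1) / (k : K) ^ (m + 1) := by
        rw [sum_Icc_succ_top (by omega), choose_succ_self, cast_zero, zero_mul, zero_div, add_zero]

theorem alternatingChooseSeries_eq_prod {n : ℕ} (hn : 1 ≤ n) :
    alternatingChooseSeries K n = ∏ k ∈ Icc 1 n, geom (1 / (k : K)) := by
  induction n, hn using Nat.le_induction with
  | base => ext m; simp [alternatingChooseSeries, geom]
  | succ n hn ih =>
    apply mul_right_cancel₀
      (right_ne_zero_of_mul_eq_one (geom_mul_one_sub (1 / ((n + 1 : ℕ) : K))))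
    rw [alternatingChooseSeries_succ_mul (by omega), ih, prod_Icc_succ_top (by omega), mul_assoc,
      geom_mul_one_sub, mul_one]

end AlternatingChoose

theorem derivative_harmonicLogSeries (n : ℕ) :
    d⁄dX ℚ (harmonicLogSeries n) =
      ∑ k ∈ Icc 1 n, C (1 / (k : ℚ)) * geom (1 / (k : ℚ)) := by
  ext m
  rw [coeff_derivative, map_sum]
  simp only [harmonicLogSeries, geom, coeff_mk, coeff_C_mul, if_neg (succ_ne_zero m)]
  rw [← cast_succ, div_mul_cancel₀ _ (by positivity)]
  exact sum_congr rfl fun k _ => by ring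

/-- For every `n ≥ 1`, as formal power series over `ℚ`,
`Σ_{m≥0} (Σ_{k=1}^{n} C(n,k) (-1)^{k-1} / k^m) z^m = exp(Σ_{j≥1} (H_n^{(j)}/j) z^j)`,
where the exponential of a power series `g` with zero constant term is obtained by
substituting `g` into `Σ_{r≥0} z^r/r!`; since `g` has zero constant term, the `m`-th
coefficient of the substitution is the finite sum `Σ_{r=0}^{m} coeff_m(g^r)/r!`. -/
theorem alternating_binomial_sum_exp (n : ℕ) (hn : 1 ≤ n) :
    PowerSeries.mk
        (fun m => ∑ k ∈ Finset.Icc 1 n, (n.choose k : ℚ) * (-1 : ℚ) ^ (k - 1) / (k : ℚ) ^ m) =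
      PowerSeries.mk
        (fun m => ∑ r ∈ Finset.range (m + 1),
          PowerSeries.coeff m ((harmonicLogSeries n) ^ r) / (r.factorial : ℚ)) := by
  have hg : constantCoeff (harmonicLogSeries n) = 0 := by
    simp [harmonicLogSeries, ← coeff_zero_eq_constantCoeff_apply]
  have hprod : d⁄dX ℚ (∏ k ∈ Icc 1 n, geom (1 / (k : ℚ))) =
      (∏ k ∈ Icc 1 n, geom (1 / (k : ℚ))) * d⁄dX ℚ (harmonicLogSeries n) := by
    rw [derivative_harmonicLogSeries]
    exact (d⁄dX ℚ).map_prod_of_forall_eq_mul _ fun k _ => derivative_geom _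
  calc _ = ∏ k ∈ Icc 1 n, geom (1 / (k : ℚ)) := alternatingChooseSeries_eq_prod hn
    _ = (exp ℚ).subst (harmonicLogSeries n) :=
      eq_of_derivative_eq_mul hprod (derivative_subst_exp hg)
        (by simp [map_prod, constantCoeff_subst_exp hg])
    _ = _ := by ext m; rw [coeff_subst_exp hg, coeff_mk]
end

section
/- For every integer n ≥ 1, Σ_{k=1}^{n} C(n,k) (-1)^{k-1} / k^2 = (H_n)^2/2 + H_n^{(2)}/2, where H_n = Σ_{k=1}^{n} 1/k and H_n^{(2)} = Σ_{k=1}^{n} 1/k^2. -/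
/-!
Write `S_p(n) = ∑_{k=1}^n C(n,k) (-1)^(k-1) / k^p`. Pascal's rule and `C(n,k-1)/k = C(n+1,k)/(n+1)`
give `S_{p+1}(n+1) = S_{p+1}(n) + S_p(n+1)/(n+1)`. As `S_0(n+1) = 1` (the alternating row sum of
Pascal's triangle), this yields `S_1(n) = H_n` and `S_2(n) = ∑_{m ≤ n} H_m / m`, and the latter
sum telescopes to `(H_n² + H_n^{(2)})/2` because `H_m² - H_{m-1}² = 2 H_m / m - 1 / m²`.
-/

open Finset

def alternatingChooseSum (K : Type*) [Field K] (p n : ℕ) : K :=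
  ∑ k ∈ Icc 1 n, (n.choose k : K) * (-1) ^ (k - 1) / (k : K) ^ p

lemma neg_one_pow_pred {M : Type*} [Monoid M] [HasDistribNeg M] {k : ℕ} (hk : 1 ≤ k) :
    (-1 : M) ^ (k - 1) = -(-1) ^ k := by
  obtain ⟨j, rfl⟩ := Nat.exists_eq_add_of_le' hk
  rw [Nat.add_sub_cancel, pow_succ, mul_neg_one, neg_neg]

section

variable {K : Type*} [Field K] [CharZero K]

lemma alternatingChooseSum_zero_succ (n : ℕ) : alternatingChooseSum K 0 (n + 1) = 1 := by
  have hrow : ∑ k ∈ range (n + 1 + 1), (-1 : K) ^ k * ((n + 1).choose k : K) = 0 := by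
    exact_mod_cast congrArg (Int.cast : ℤ → K)
      (Int.alternating_sum_range_choose_of_ne n.succ_ne_zero)
  rw [range_eq_Ico, sum_eq_sum_Ico_succ_bot (by omega), zero_add, Ico_add_one_right_eq_Icc] at hrow
  have hterm : ∀ k ∈ Icc 1 (n + 1), ((n + 1).choose k : K) * (-1) ^ (k - 1) / (k : K) ^ 0 =
      -((-1 : K) ^ k * ((n + 1).choose k : K)) := fun k hk => by
    rw [neg_one_pow_pred (mem_Icc.1 hk).1]; ring
  rw [alternatingChooseSum, sum_congr rfl hterm, sum_neg_distrib]
  simp only [pow_zero, Nat.choose_zero_right, Nat.cast_one, mul_one] at hrow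
  linear_combination -hrow

lemma cast_choose_div_succ (n k : ℕ) :
    (n.choose k : K) / (k + 1) = ((n + 1).choose (k + 1) : K) / (n + 1) := by
  have h : ((n + 1 : ℕ) : K) * n.choose k = (n + 1).choose (k + 1) * (k + 1 : ℕ) := by
    exact_mod_cast Nat.add_one_mul_choose_eq n k
  push_cast at h
  rw [div_eq_div_iff (Nat.cast_add_one_ne_zero k) (Nat.cast_add_one_ne_zero n)]
  linear_combination h

lemma alternatingChooseSum_succ_succ (p n : ℕ) :
    alternatingChooseSum K (p + 1) (n + 1) =
      alternatingChooseSum K (p + 1) n + alternatingChooseSum K p (n + 1) / (n + 1) := by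
  have hpascal : ∀ k ∈ Icc 1 (n + 1),
      ((n + 1).choose k : K) * (-1) ^ (k - 1) / (k : K) ^ (p + 1) =
        (n.choose k : K) * (-1) ^ (k - 1) / (k : K) ^ (p + 1) +
          ((n + 1).choose k : K) * (-1) ^ (k - 1) / (k : K) ^ p / (n + 1) := fun k hk => by
    obtain ⟨j, rfl⟩ := Nat.exists_eq_add_of_le' (mem_Icc.1 hk).1
    have hj : (j : K) + 1 ≠ 0 := Nat.cast_add_one_ne_zero j
    push_cast
    calc ((n + 1).choose (j + 1) : K) * (-1) ^ j / ((j : K) + 1) ^ (p + 1)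
        = (n.choose (j + 1) : K) * (-1) ^ j / ((j : K) + 1) ^ (p + 1) +
            (n.choose j : K) / (j + 1) * ((-1) ^ j / ((j : K) + 1) ^ p) := by
          rw [Nat.choose_succ_succ', Nat.cast_add]; field_simp; ring
      _ = _ := by rw [cast_choose_div_succ]; ring
  have htop : ∑ k ∈ Icc 1 (n + 1), (n.choose k : K) * (-1) ^ (k - 1) / (k : K) ^ (p + 1) =
      alternatingChooseSum K (p + 1) n := by
    rw [sum_Icc_succ_top (by omega), Nat.choose_succ_self, Nat.cast_zero, zero_mul, zero_div,
      add_zero, alternatingChooseSum]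
  rw [alternatingChooseSum, sum_congr rfl hpascal, sum_add_distrib, htop, ← sum_div]
  rfl

lemma alternatingChooseSum_one (n : ℕ) :
    alternatingChooseSum K 1 n = ∑ k ∈ Icc 1 n, 1 / (k : K) := by
  induction n with
  | zero => simp [alternatingChooseSum]
  | succ n ih =>
    rw [alternatingChooseSum_succ_succ, alternatingChooseSum_zero_succ, ih,
      sum_Icc_succ_top (by omega)]
    push_cast
    ring

lemma alternatingChooseSum_two (n : ℕ) :
    alternatingChooseSum K 2 n =
      (∑ k ∈ Icc 1 n, 1 / (k : K)) ^ 2 / 2 + (∑ k ∈ Icc 1 n, 1 / (k : K) ^ 2) / 2 := by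
  induction n with
  | zero => simp [alternatingChooseSum]
  | succ n ih =>
    have hn : (n : K) + 1 ≠ 0 := Nat.cast_add_one_ne_zero n
    rw [alternatingChooseSum_succ_succ, ih, alternatingChooseSum_one]
    simp only [sum_Icc_succ_top (show 1 ≤ n + 1 by omega)]
    push_cast
    field_simp
    ring

end

theorem alternating_binomial_sum_two_general (n : ℕ) :
    (∑ k ∈ Finset.Icc 1 n, (n.choose k : ℚ) * (-1 : ℚ) ^ (k - 1) / (k : ℚ) ^ 2) =
      (∑ k ∈ Finset.Icc 1 n, (1 : ℚ) / k) ^ 2 / 2 +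
        (∑ k ∈ Finset.Icc 1 n, (1 : ℚ) / (k : ℚ) ^ 2) / 2 :=
  alternatingChooseSum_two n

/-- For every `n ≥ 1`,
`Σ_{k=1}^{n} C(n,k) (-1)^{k-1} / k² = H_n²/2 + H_n^{(2)}/2`. -/
theorem alternating_binomial_sum_two (n : ℕ) (hn : 1 ≤ n) :
    (∑ k ∈ Finset.Icc 1 n, (n.choose k : ℚ) * (-1 : ℚ) ^ (k - 1) / (k : ℚ) ^ 2) =
      (∑ k ∈ Finset.Icc 1 n, (1 : ℚ) / k) ^ 2 / 2 +
        (∑ k ∈ Finset.Icc 1 n, (1 : ℚ) / (k : ℚ) ^ 2) / 2 :=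
  alternating_binomial_sum_two_general n
end

section
/- For every integer n ≥ 1, Σ_{k=1}^{n} C(n,k) (-1)^{k-1} / k^3 = (H_n)^3/6 + H_n · H_n^{(2)}/2 + H_n^{(3)}/3, where H_n = Σ_{k=1}^{n} 1/k, H_n^{(2)} = Σ_{k=1}^{n} 1/k^2, and H_n^{(3)} = Σ_{k=1}^{n} 1/k^3. -/
/-!
Pascal's rule together with `k · C(n+1, k) = (n+1) · C(n, k-1)` gives the recurrence
`A_{j+1}(n+1) = A_{j+1}(n) + A_j(n+1) / (n+1)` for `A_j(n) = Σ_k C(n,k) (-1)^(k-1) / k^j`, and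
`A_0(n+1) = 1` because alternating sums of binomial coefficients vanish. Hence `A_j(n)` is the
complete homogeneous symmetric polynomial `h_j(1, 1/2, …, 1/n)`, and the formula for `A_3`, which
expresses `h_3` through power sums, follows by induction on `n` from those for `A_1` and `A_2`.
-/

open Finset

variable (K : Type*) [Field K]

def altBinomialSum (j n : ℕ) : K :=
  ∑ k ∈ Icc 1 n, (n.choose k : K) * (-1) ^ (k - 1) / (k : K) ^ j

def genHarmonic (j n : ℕ) : K := ∑ k ∈ Icc 1 n, 1 / (k : K) ^ j

variable {K}

lemma genHarmonic_succ (j n : ℕ) :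
    genHarmonic K j (n + 1) = genHarmonic K j n + 1 / ((n : K) + 1) ^ j := by
  rw [genHarmonic, sum_Icc_succ_top (by omega), Nat.cast_succ, genHarmonic]

lemma altBinomialSum_zero_succ (n : ℕ) : altBinomialSum K 0 (n + 1) = 1 := by
  have hvanish := Int.alternating_sum_range_choose_of_ne (n := n + 1) n.succ_ne_zero
  rw [range_eq_Ico, sum_eq_sum_Ico_succ_bot (by omega), Ico_add_one_right_eq_Icc] at hvanish
  have htail : ∑ k ∈ Icc 1 (n + 1), ((-1) ^ k * (n + 1).choose k : K) = -1 := by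
    simp only [pow_zero, Nat.choose_zero_right, Nat.cast_one, mul_one, zero_add] at hvanish
    simpa using congrArg (Int.cast : ℤ → K) (eq_neg_of_add_eq_zero_right hvanish)
  have hflip : altBinomialSum K 0 (n + 1) =
      -∑ k ∈ Icc 1 (n + 1), ((-1) ^ k * (n + 1).choose k : K) := by
    rw [altBinomialSum, ← sum_neg_distrib]
    refine sum_congr rfl fun k hk => ?_
    obtain ⟨m, rfl⟩ := Nat.exists_eq_add_one_of_ne_zero (by simp at hk; omega : k ≠ 0)
    rw [Nat.add_sub_cancel, pow_zero, div_one, pow_succ]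
    ring
  rw [hflip, htail, neg_neg]

variable [CharZero K]

lemma choose_succ_eq_choose_add (n k : ℕ) :
    ((n + 1).choose (k + 1) : K) =
      n.choose (k + 1) + (n + 1).choose (k + 1) * (k + 1) / (n + 1) := by
  have hpascal : ((n + 1).choose (k + 1) : K) = n.choose k + n.choose (k + 1) := by
    exact_mod_cast Nat.choose_succ_succ' n k
  have habsorb : ((n : K) + 1) * n.choose k = (n + 1).choose (k + 1) * (k + 1) := by
    exact_mod_cast Nat.add_one_mul_choose_eq n k
  rw [← habsorb, mul_div_cancel_left₀ _ (Nat.cast_add_one_ne_zero n), hpascal]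
  ring

lemma altBinomialSum_succ_succ (j n : ℕ) :
    altBinomialSum K (j + 1) (n + 1) =
      altBinomialSum K (j + 1) n + altBinomialSum K j (n + 1) / ((n : K) + 1) := by
  have hext : altBinomialSum K (j + 1) n =
      ∑ k ∈ Icc 1 (n + 1), (n.choose k : K) * (-1) ^ (k - 1) / (k : K) ^ (j + 1) := by
    rw [sum_Icc_succ_top (by omega), Nat.choose_succ_self, Nat.cast_zero, zero_mul, zero_div,
      add_zero, altBinomialSum]
  rw [hext, altBinomialSum, altBinomialSum, sum_div, ← sum_add_distrib]
  refine sum_congr rfl fun k hk => ?_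
  obtain ⟨m, rfl⟩ := Nat.exists_eq_add_one_of_ne_zero (by simp at hk; omega : k ≠ 0)
  conv_lhs => rw [choose_succ_eq_choose_add]
  push_cast
  field_simp
  ring

lemma altBinomialSum_one (n : ℕ) : altBinomialSum K 1 n = genHarmonic K 1 n := by
  induction n with
  | zero => simp [altBinomialSum, genHarmonic]
  | succ n ih =>
    rw [altBinomialSum_succ_succ, altBinomialSum_zero_succ, ih, genHarmonic_succ, pow_one]

lemma altBinomialSum_two (n : ℕ) :
    altBinomialSum K 2 n = (genHarmonic K 1 n ^ 2 + genHarmonic K 2 n) / 2 := by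
  induction n with
  | zero => simp [altBinomialSum, genHarmonic]
  | succ n ih =>
    rw [altBinomialSum_succ_succ, altBinomialSum_one, ih, genHarmonic_succ, genHarmonic_succ]
    field_simp
    ring

lemma altBinomialSum_three (n : ℕ) :
    altBinomialSum K 3 n = genHarmonic K 1 n ^ 3 / 6 + genHarmonic K 1 n * genHarmonic K 2 n / 2 +
      genHarmonic K 3 n / 3 := by
  induction n with
  | zero => simp [altBinomialSum, genHarmonic]
  | succ n ih =>
    rw [altBinomialSum_succ_succ, altBinomialSum_two, ih, genHarmonic_succ, genHarmonic_succ,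
      genHarmonic_succ]
    field_simp
    ring

theorem alternating_binomial_sum_three_general (n : ℕ) :
    (∑ k ∈ Finset.Icc 1 n, (n.choose k : ℚ) * (-1 : ℚ) ^ (k - 1) / (k : ℚ) ^ 3) =
      (∑ k ∈ Finset.Icc 1 n, (1 : ℚ) / k) ^ 3 / 6 +
        (∑ k ∈ Finset.Icc 1 n, (1 : ℚ) / k) *
          (∑ k ∈ Finset.Icc 1 n, (1 : ℚ) / (k : ℚ) ^ 2) / 2 +
        (∑ k ∈ Finset.Icc 1 n, (1 : ℚ) / (k : ℚ) ^ 3) / 3 := by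
  simpa only [altBinomialSum, genHarmonic, pow_one] using altBinomialSum_three (K := ℚ) n

/-- For every `n ≥ 1`,
`Σ_{k=1}^{n} C(n,k) (-1)^{k-1} / k³ = H_n³/6 + H_n·H_n^{(2)}/2 + H_n^{(3)}/3`. -/
theorem alternating_binomial_sum_three (n : ℕ) (hn : 1 ≤ n) :
    (∑ k ∈ Finset.Icc 1 n, (n.choose k : ℚ) * (-1 : ℚ) ^ (k - 1) / (k : ℚ) ^ 3) =
      (∑ k ∈ Finset.Icc 1 n, (1 : ℚ) / k) ^ 3 / 6 +
        (∑ k ∈ Finset.Icc 1 n, (1 : ℚ) / k) *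
          (∑ k ∈ Finset.Icc 1 n, (1 : ℚ) / (k : ℚ) ^ 2) / 2 +
        (∑ k ∈ Finset.Icc 1 n, (1 : ℚ) / (k : ℚ) ^ 3) / 3 :=
  alternating_binomial_sum_three_general n
end

section
/- The Euler sum S_{1,2} := Σ_{n=1}^{∞} H_n / n^2 converges and equals 2ζ(3), where H_n = Σ_{k=1}^{n} 1/k is the n-th harmonic number and ζ is the Riemann zeta function. -/
/-!
Write `S = Σ_{m ≥ 1} H_m / m²`. Telescoping gives `H_m / m = Σ_{n ≥ 1} 1 / (n (m + n))`, so
`S = Σ_{m, n ≥ 1} 1 / (m n (m + n))`, a double series that converges absolutely because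
`m n (m + n) ≥ (m n)^{3/2}`. Splitting `1 / (m n (m + n)) = 1 / (m (m + n)²) + 1 / (n (m + n)²)`
and using the symmetry in `m, n` shows `S = 2 Σ_{m, n ≥ 1} 1 / (m (m + n)²)`. Summing the latter
along the lines `m + n = N` gives `Σ_{N ≥ 2} H_{N-1} / N² = S - ζ(3)`. Hence `S = 2 (S - ζ(3))`.
-/

open Finset Filter Topology

theorem Antitone.hasSum_sub_add {g : ℕ → ℝ} (hg : Antitone g) (hg0 : Tendsto g atTop (𝓝 0))
    (k : ℕ) : HasSum (fun n => g n - g (n + k)) (∑ i ∈ range k, g i) := by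
  rw [hasSum_iff_tendsto_nat_of_nonneg (fun n => sub_nonneg.mpr (hg (Nat.le_add_right n k)))]
  have partial_sum (N : ℕ) : ∑ n ∈ range N, (g n - g (n + k)) =
      ∑ i ∈ range k, g i - ∑ i ∈ range k, g (N + i) := by
    have h₁ := sum_range_add g N k
    have h₂ := sum_range_add g k N
    simp only [sum_sub_distrib, add_comm N k, add_comm _ k] at *
    linarith
  have tail : Tendsto (fun N => ∑ i ∈ range k, g (N + i)) atTop (𝓝 0) := by
    simpa using tendsto_finsetSum (range k) fun i _ => hg0.comp (tendsto_add_atTop_nat i)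
  simpa [partial_sum] using tail.const_sub (∑ i ∈ range k, g i)

theorem hasSum_one_div_add_one_sub_one_div_add (k : ℕ) :
    HasSum (fun n : ℕ => 1 / ((n : ℝ) + 1) - 1 / ((n : ℝ) + k + 1)) (harmonic k) := by
  have hanti : Antitone fun n : ℕ => 1 / ((n : ℝ) + 1) :=
    fun m n hmn => by dsimp only; gcongr
  convert hanti.hasSum_sub_add tendsto_one_div_add_atTop_nhds_zero_nat k using 1
  · ext n; push_cast; ring_nf
  · simp [harmonic, one_div]

theorem HasSum.sum_antidiagonal {α A : Type*} [AddCommMonoid α] [TopologicalSpace α]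
    [ContinuousAdd α] [RegularSpace α] [AddCommMonoid A] [HasAntidiagonal A] {f : A × A → α}
    {a : α} (hf : HasSum f a) : HasSum (fun n => ∑ p ∈ antidiagonal n, f p) a :=
  (HasAntidiagonal.sigmaAntidiagonalEquivProd.hasSum_iff.mpr hf).sigma fun n => by
    rw [← sum_coe_sort]
    exact hasSum_fintype _

theorem one_div_mul_mul_add_le {x y : ℝ} (hx : 0 < x) (hy : 0 < y) :
    1 / (x * y * (x + y)) ≤ 1 / x ^ (3 / 2 : ℝ) * (1 / y ^ (3 / 2 : ℝ)) := by
  have rpow_eq {z : ℝ} (hz : 0 < z) : z ^ (3 / 2 : ℝ) = z * √z := by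
    rw [show (3 / 2 : ℝ) = 1 + 1 / 2 by norm_num, Real.rpow_add hz, Real.rpow_one,
      Real.sqrt_eq_rpow]
  have sqrt_mul_sqrt_le : √x * √y ≤ x + y := by
    nlinarith [Real.sq_sqrt hx.le, Real.sq_sqrt hy.le, Real.sqrt_nonneg x, Real.sqrt_nonneg y,
      sq_nonneg (√x - √y)]
  rw [rpow_eq hx, rpow_eq hy, div_mul_div_comm, one_mul]
  gcongr 1 / ?_
  calc x * √x * (y * √y) = x * y * (√x * √y) := by ring
    _ ≤ x * y * (x + y) := by gcongr

namespace EulerSum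

-- In the notation of the header, `p = (m - 1, n - 1)`.
noncomputable def term (p : ℕ × ℕ) : ℝ :=
  1 / (((p.1 : ℝ) + 1) * ((p.2 : ℝ) + 1) * (((p.1 : ℝ) + 1) + ((p.2 : ℝ) + 1)))

noncomputable def halfTerm (p : ℕ × ℕ) : ℝ :=
  1 / (((p.1 : ℝ) + 1) * (((p.1 : ℝ) + 1) + ((p.2 : ℝ) + 1)) ^ 2)

theorem halfTerm_nonneg (p : ℕ × ℕ) : 0 ≤ halfTerm p := by
  unfold halfTerm; positivity

theorem term_eq_halfTerm_add_halfTerm_swap (p : ℕ × ℕ) :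
    term p = halfTerm p + halfTerm p.swap := by
  unfold term halfTerm
  simp only [Prod.fst_swap, Prod.snd_swap]
  field_simp
  ring

theorem summable_term : Summable term := by
  have h : Summable fun n : ℕ => 1 / ((n : ℝ) + 1) ^ (3 / 2 : ℝ) := by
    simpa using (summable_nat_add_iff 1).mpr
      (Real.summable_one_div_nat_rpow.mpr (by norm_num : (1 : ℝ) < 3 / 2))
  refine .of_nonneg_of_le (fun p => ?_) (fun p => ?_)
    (h.mul_of_nonneg h (fun _ => by positivity) (fun _ => by positivity))
  · unfold term; positivity
  · exact one_div_mul_mul_add_le (by positivity) (by positivity)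

theorem summable_halfTerm : Summable halfTerm :=
  summable_term.of_nonneg_of_le halfTerm_nonneg fun p => by
    rw [term_eq_halfTerm_add_halfTerm_swap]
    exact le_add_of_nonneg_right (halfTerm_nonneg _)

theorem tsum_term_eq_two_mul_tsum_halfTerm : ∑' p, term p = 2 * ∑' p, halfTerm p := by
  simp_rw [term_eq_halfTerm_add_halfTerm_swap]
  rw [summable_halfTerm.tsum_add summable_halfTerm.prod_symm, two_mul]
  exact congrArg _ ((Equiv.prodComm ℕ ℕ).tsum_eq halfTerm)

theorem hasSum_term_fiber (m : ℕ) :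
    HasSum (fun n => term (m, n)) ((harmonic (m + 1) : ℝ) / ((m : ℝ) + 1) ^ 2) := by
  rw [← one_div_mul_eq_div]
  refine ((hasSum_one_div_add_one_sub_one_div_add (m + 1)).mul_left _).congr_fun fun n => ?_
  unfold term
  push_cast
  field_simp
  ring

theorem sum_antidiagonal_halfTerm (N : ℕ) :
    ∑ p ∈ antidiagonal N, halfTerm p = (harmonic (N + 1) : ℝ) / ((N : ℝ) + 2) ^ 2 := by
  rw [Nat.sum_antidiagonal_eq_sum_range_succ_mk, div_eq_mul_one_div, harmonic, Rat.cast_sum,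
    sum_mul]
  refine sum_congr rfl fun k hk => ?_
  unfold halfTerm
  rw [Nat.cast_sub (Nat.lt_succ_iff.mp (mem_range.mp hk))]
  push_cast
  rw [show (k : ℝ) + 1 + (N - k + 1) = N + 2 by ring, one_div, one_div, mul_inv]

theorem hasSum_harmonic_div_sq :
    HasSum (fun n : ℕ => (harmonic (n + 1) : ℝ) / ((n : ℝ) + 1) ^ 2)
      (2 * ∑' n : ℕ, 1 / ((n : ℝ) + 1) ^ 3) := by
  set S := ∑' p, term p
  set Z := ∑' n : ℕ, 1 / ((n : ℝ) + 1) ^ 3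
  have hS : HasSum (fun n : ℕ => (harmonic (n + 1) : ℝ) / ((n : ℝ) + 1) ^ 2) S :=
    summable_term.hasSum.prod_fiberwise hasSum_term_fiber
  have hZ : HasSum (fun n : ℕ => 1 / ((n : ℝ) + 1) ^ 3) Z := by
    refine Summable.hasSum ?_
    simpa using (summable_nat_add_iff 1).mpr
      (Real.summable_one_div_nat_pow.mpr (by norm_num : 1 < 3))
  have antidiagonals :
      HasSum (fun N : ℕ => (harmonic (N + 1) : ℝ) / ((N : ℝ) + 2) ^ 2) (S / 2) := by
    rw [show S = 2 * ∑' p, halfTerm p from tsum_term_eq_two_mul_tsum_halfTerm,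
      mul_div_cancel_left₀ _ two_ne_zero]
    simpa only [sum_antidiagonal_halfTerm] using summable_halfTerm.hasSum.sum_antidiagonal
  have shifted :
      HasSum (fun N : ℕ => (harmonic (N + 1) : ℝ) / ((N : ℝ) + 2) ^ 2) (S - Z) := by
    have h := ((hasSum_nat_add_iff' 1).mpr hS).sub ((hasSum_nat_add_iff' 1).mpr hZ)
    have harmonic_one : (harmonic 1 : ℝ) = 1 := by simp [harmonic]
    simp only [sum_range_one, Nat.cast_zero, zero_add, harmonic_one, one_pow, div_one,
      sub_sub_sub_cancel_right] at h
    refine h.congr_fun fun N => ?_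
    rw [harmonic_succ (N + 1)]
    push_cast
    field_simp
    ring
  rwa [show 2 * Z = S by linarith [antidiagonals.unique shifted]]

end EulerSum

/-- The Euler sum `S_{1,2} = Σ_{n≥1} H_n/n²` converges and equals
`2ζ(3)`, where `H_n` is the `n`-th harmonic number and `ζ` the Riemann zeta
function. -/
theorem euler_sum_one_two :
    HasSum (fun n : ℕ => ((harmonic (n + 1) : ℝ) : ℂ) / ((n : ℂ) + 1) ^ 2)
      (2 * riemannZeta 3) := by
  have zeta_three : riemannZeta 3 = ((∑' n : ℕ, 1 / ((n : ℝ) + 1) ^ 3 : ℝ) : ℂ) := by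
    rw [zeta_eq_tsum_one_div_nat_add_one_cpow (by norm_num), Complex.ofReal_tsum]
    push_cast
    norm_cast
  rw [zeta_three]
  exact_mod_cast Complex.hasSum_ofReal.mpr EulerSum.hasSum_harmonic_div_sq
end

section
/- The Euler sum S_{2,4} := Σ_{n=1}^{∞} H_n^{(2)} / n^4 converges and equals ζ(3)^2 - (1/3)·ζ(6), where H_n^{(2)} = Σ_{k=1}^{n} 1/k^2 and ζ is the Riemann zeta function. -/
/-!
Write `ζ(s, t) = ∑_{n > m ≥ 1} n⁻ˢ m⁻ᵗ`, so that `S_{2,4} = ζ(4, 2) + ζ(6)`. The products `ζ(3)²`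
and `ζ(2) ζ(4)` are expanded in two ways: splitting the double sum into `n > m`, `n = m`, `n < m`
(stuffle) gives `ζ(s) ζ(t) = ζ(s, t) + ζ(t, s) + ζ(s + t)`, while partial fractions of
`1 / (m^a n^b)` in powers of `1 / (m + n)` (shuffle) express them through `ζ(3, 3)`, `ζ(4, 2)`,
`ζ(2, 4)` and `ζ(5, 1)`. Eliminating these from the four relations leaves
`ζ(4, 2) = ζ(3)² - 4/3 ζ(6)`.
-/

open Finset

namespace EulerSum

noncomputable def zetaTerm (s n : ℕ) : ℂ := 1 / ((n : ℂ) + 1) ^ s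

/-- The term of `ζ(s, t) = ∑_{n > m ≥ 1} n⁻ˢ m⁻ᵗ` at `m = p.1 + 1`, `n = p.1 + p.2 + 2`. -/
noncomputable def doubleZetaTerm (s t : ℕ) (p : ℕ × ℕ) : ℂ :=
  zetaTerm s (p.1 + p.2 + 1) * zetaTerm t p.1

noncomputable def doubleZeta (s t : ℕ) : ℂ := ∑' p, doubleZetaTerm s t p

lemma norm_zetaTerm (s n : ℕ) : ‖zetaTerm s n‖ = 1 / ((n : ℝ) + 1) ^ s := by
  rw [zetaTerm, norm_div, norm_pow, norm_one, ← Nat.cast_succ, Complex.norm_natCast,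
    Nat.cast_succ]

lemma zetaTerm_mul_zetaTerm (s t n : ℕ) : zetaTerm s n * zetaTerm t n = zetaTerm (s + t) n := by
  rw [zetaTerm, zetaTerm, zetaTerm, div_mul_div_comm, one_mul, pow_add]

lemma summable_norm_zetaTerm {s : ℕ} (hs : 2 ≤ s) : Summable fun n ↦ ‖zetaTerm s n‖ := by
  simp only [norm_zetaTerm]
  exact_mod_cast (summable_nat_add_iff 1).mpr (Real.summable_one_div_nat_pow.mpr hs)

lemma hasSum_zetaTerm {s : ℕ} (hs : 2 ≤ s) : HasSum (zetaTerm s) (riemannZeta s) := by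
  have hre : 1 < (s : ℂ).re := by simp only [Complex.natCast_re]; exact_mod_cast hs
  rw [zeta_eq_tsum_one_div_nat_add_one_cpow hre]
  simp only [Complex.cpow_natCast]
  exact (summable_norm_zetaTerm hs).of_norm.hasSum

lemma norm_doubleZetaTerm_le {s t : ℕ} (hs : 2 ≤ s) (hst : 4 ≤ s + t) (p : ℕ × ℕ) :
    ‖doubleZetaTerm s t p‖ ≤ ‖zetaTerm 2 p.1 * zetaTerm 2 p.2‖ := by
  obtain ⟨k, rfl⟩ := Nat.exists_eq_add_of_le' hs
  simp only [doubleZetaTerm, norm_mul, norm_zetaTerm]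
  rw [div_mul_div_comm, div_mul_div_comm, one_mul]
  set x : ℝ := p.1 + 1
  set y : ℝ := p.2 + 1
  have hx : 1 ≤ x := by simp [x]
  have hy : 1 ≤ y := by simp [y]
  have hxy : ((p.1 + p.2 + 1 : ℕ) : ℝ) + 1 = x + y := by push_cast [x, y]; ring
  rw [hxy]
  gcongr 1 / ?_
  calc x ^ 2 * y ^ 2 ≤ x ^ (k + t) * y ^ 2 := by gcongr; omega
    _ = x ^ k * y ^ 2 * x ^ t := by ring
    _ ≤ (x + y) ^ k * (x + y) ^ 2 * x ^ t := by gcongr <;> linarith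
    _ = (x + y) ^ (k + 2) * x ^ t := by ring

lemma summable_doubleZetaTerm {s t : ℕ} (hs : 2 ≤ s) (hst : 4 ≤ s + t) :
    Summable (doubleZetaTerm s t) :=
  .of_norm_bounded ((summable_norm_zetaTerm le_rfl).mul_norm (summable_norm_zetaTerm le_rfl))
    (norm_doubleZetaTerm_le hs hst)

lemma hasSum_doubleZeta (s t : ℕ) (hs : 2 ≤ s := by norm_num) (hst : 4 ≤ s + t := by norm_num) :
    HasSum (doubleZetaTerm s t) (doubleZeta s t) :=
  (summable_doubleZetaTerm hs hst).hasSum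

lemma hasSum_doubleZeta_swap (s t : ℕ) (hs : 2 ≤ s := by norm_num)
    (hst : 4 ≤ s + t := by norm_num) :
    HasSum (fun p : ℕ × ℕ ↦ doubleZetaTerm s t p.swap) (doubleZeta s t) :=
  (Equiv.prodComm ℕ ℕ).hasSum_iff.mpr (hasSum_doubleZeta s t hs hst)

lemma hasSum_zetaTerm_mul_tail {s t : ℕ} (hs : 2 ≤ s) (h : Summable (doubleZetaTerm s t)) :
    HasSum (fun m ↦ zetaTerm t m * (riemannZeta s - ∑ i ∈ range (m + 1), zetaTerm s i))
      (doubleZeta s t) := by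
  refine h.hasSum.prod_fiberwise fun m ↦ ?_
  have htail := (hasSum_nat_add_iff (f := zetaTerm s) (m + 1)).mpr
    (by rw [sub_add_cancel]; exact hasSum_zetaTerm hs)
  have hfiber :
      (fun u ↦ doubleZetaTerm s t (m, u)) = fun u ↦ zetaTerm t m * zetaTerm s (u + (m + 1)) := by
    funext u
    rw [doubleZetaTerm, mul_comm, show m + u + 1 = u + (m + 1) by omega]
  exact hfiber ▸ htail.mul_left (zetaTerm t m)

lemma hasSum_sum_range_mul_zetaTerm {s t : ℕ} (h : Summable (doubleZetaTerm s t)) :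
    HasSum (fun n ↦ (∑ i ∈ range n, zetaTerm t i) * zetaTerm s n) (doubleZeta s t) := by
  -- the fibre of `p ↦ p.1 + p.2` over `n` is the set of pairs with outer index `n + 2`
  have hsigma := (Finset.HasAntidiagonal.sigmaAntidiagonalEquivProd).hasSum_iff.mpr h.hasSum
  have hdiag := hsigma.sigma fun n ↦ hasSum_fintype _
  rw [← hasSum_nat_add_iff' 1, range_one, sum_singleton, range_zero, sum_empty, zero_mul, sub_zero]
  have hfiber (n : ℕ) : ∑ p ∈ antidiagonal n, doubleZetaTerm s t p =
      (∑ i ∈ range (n + 1), zetaTerm t i) * zetaTerm s (n + 1) := by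
    rw [Nat.sum_antidiagonal_eq_sum_range_succ_mk, sum_mul]
    refine sum_congr rfl fun k hk ↦ ?_
    rw [doubleZetaTerm, mul_comm, Nat.add_sub_of_le (Nat.lt_succ_iff.mp (mem_range.mp hk))]
  simp only [Function.comp_apply, HasAntidiagonal.sigmaAntidiagonalEquivProd_apply,
    sum_coe_sort, hfiber] at hdiag
  exact hdiag

lemma hasSum_sum_range_succ_mul_zetaTerm {s t : ℕ} (h : Summable (doubleZetaTerm s t))
    (hst : 2 ≤ s + t) :
    HasSum (fun n ↦ (∑ i ∈ range (n + 1), zetaTerm t i) * zetaTerm s n)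
      (doubleZeta s t + riemannZeta (s + t : ℕ)) := by
  simp only [sum_range_succ, add_mul, zetaTerm_mul_zetaTerm, add_comm t s]
  exact (hasSum_sum_range_mul_zetaTerm h).add (hasSum_zetaTerm hst)

lemma riemannZeta_mul_riemannZeta (s t : ℕ) (hs : 2 ≤ s := by norm_num)
    (ht : 2 ≤ t := by norm_num) :
    riemannZeta s * riemannZeta t = doubleZeta s t + doubleZeta t s + riemannZeta (s + t : ℕ) := by
  -- split `ζ(s) = ∑_{n > m} n⁻ˢ + ∑_{n ≤ m} n⁻ˢ` inside `ζ(t) ζ(s) = ∑_m m⁻ᵗ ζ(s)`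
  have hrow := hasSum_zetaTerm_mul_tail hs (summable_doubleZetaTerm (t := t) hs (by omega))
  have hcol := hasSum_sum_range_succ_mul_zetaTerm
    (summable_doubleZetaTerm (t := s) ht (by omega)) (by omega)
  have hsplit := hrow.add hcol
  simp only [mul_comm _ (zetaTerm t _), ← mul_add, sub_add_cancel] at hsplit
  rw [mul_comm, add_comm s t, add_assoc]
  exact ((hasSum_zetaTerm ht).mul_right _).unique hsplit

lemma hasSum_zetaTerm_mul_zetaTerm (s t : ℕ) (hs : 2 ≤ s := by norm_num)
    (ht : 2 ≤ t := by norm_num) :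
    HasSum (fun p : ℕ × ℕ ↦ zetaTerm s p.1 * zetaTerm t p.2) (riemannZeta s * riemannZeta t) :=
  (hasSum_zetaTerm hs).mul (hasSum_zetaTerm ht)
    (summable_mul_of_summable_norm (summable_norm_zetaTerm hs) (summable_norm_zetaTerm ht))

/- Instances of `1 / (x^a y^b) = ∑_{j=1}^{a} C(a+b-j-1, b-1) / (x^j (x+y)^(a+b-j))
  + ∑_{j=1}^{b} C(a+b-j-1, a-1) / (y^j (x+y)^(a+b-j))` at `x = p.1 + 1`, `y = p.2 + 1`. -/
lemma zetaTerm_three_mul_zetaTerm_three (p : ℕ × ℕ) :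
    zetaTerm 3 p.1 * zetaTerm 3 p.2 =
      doubleZetaTerm 3 3 p + doubleZetaTerm 3 3 p.swap + 3 * doubleZetaTerm 4 2 p +
        3 * doubleZetaTerm 4 2 p.swap + 6 * doubleZetaTerm 5 1 p +
        6 * doubleZetaTerm 5 1 p.swap := by
  have hx := Nat.cast_add_one_ne_zero (R := ℂ) p.1
  have hy := Nat.cast_add_one_ne_zero (R := ℂ) p.2
  have hxy := Nat.cast_add_one_ne_zero (R := ℂ) (p.1 + p.2 + 1)
  simp only [zetaTerm, doubleZetaTerm, Prod.fst_swap, Prod.snd_swap, add_comm p.2 p.1]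
  field_simp
  push_cast
  ring

lemma zetaTerm_two_mul_zetaTerm_four (p : ℕ × ℕ) :
    zetaTerm 2 p.1 * zetaTerm 4 p.2 =
      4 * doubleZetaTerm 5 1 p + doubleZetaTerm 4 2 p + 4 * doubleZetaTerm 5 1 p.swap +
        3 * doubleZetaTerm 4 2 p.swap + 2 * doubleZetaTerm 3 3 p.swap +
        doubleZetaTerm 2 4 p.swap := by
  have hx := Nat.cast_add_one_ne_zero (R := ℂ) p.1
  have hy := Nat.cast_add_one_ne_zero (R := ℂ) p.2
  have hxy := Nat.cast_add_one_ne_zero (R := ℂ) (p.1 + p.2 + 1)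
  simp only [zetaTerm, doubleZetaTerm, Prod.fst_swap, Prod.snd_swap, add_comm p.2 p.1]
  field_simp
  push_cast
  ring

lemma riemannZeta_three_mul_riemannZeta_three :
    riemannZeta 3 * riemannZeta 3 =
      2 * doubleZeta 3 3 + 6 * doubleZeta 4 2 + 12 * doubleZeta 5 1 := by
  have hlhs := hasSum_zetaTerm_mul_zetaTerm 3 3
  simp only [zetaTerm_three_mul_zetaTerm_three, Nat.cast_ofNat] at hlhs
  have hrhs := (hasSum_doubleZeta 3 3).add (hasSum_doubleZeta_swap 3 3)
    |>.add ((hasSum_doubleZeta 4 2).mul_left 3) |>.add ((hasSum_doubleZeta_swap 4 2).mul_left 3)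
    |>.add ((hasSum_doubleZeta 5 1).mul_left 6) |>.add ((hasSum_doubleZeta_swap 5 1).mul_left 6)
  linear_combination hlhs.unique hrhs

lemma riemannZeta_two_mul_riemannZeta_four :
    riemannZeta 2 * riemannZeta 4 =
      8 * doubleZeta 5 1 + 4 * doubleZeta 4 2 + 2 * doubleZeta 3 3 + doubleZeta 2 4 := by
  have hlhs := hasSum_zetaTerm_mul_zetaTerm 2 4
  simp only [zetaTerm_two_mul_zetaTerm_four, Nat.cast_ofNat] at hlhs
  have hrhs := (hasSum_doubleZeta 5 1).mul_left 4 |>.add (hasSum_doubleZeta 4 2)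
    |>.add ((hasSum_doubleZeta_swap 5 1).mul_left 4)
    |>.add ((hasSum_doubleZeta_swap 4 2).mul_left 3)
    |>.add ((hasSum_doubleZeta_swap 3 3).mul_left 2) |>.add (hasSum_doubleZeta_swap 2 4)
  linear_combination hlhs.unique hrhs

lemma sum_Icc_one_div_sq (n : ℕ) :
    ∑ k ∈ Icc 1 (n + 1), (1 : ℂ) / (k : ℂ) ^ 2 = ∑ i ∈ range (n + 1), zetaTerm 2 i := by
  rw [← Ico_add_one_right_eq_Icc, sum_Ico_eq_sum_range]
  simp [zetaTerm, add_comm]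

end EulerSum

open EulerSum in
/-- The Euler sum `S_{2,4} = Σ_{n≥1} H_n^{(2)}/n⁴` converges and
equals `ζ(3)² - (1/3)ζ(6)`, where `H_n^{(2)} = Σ_{k=1}^{n} 1/k²` and `ζ` is the
Riemann zeta function. -/
theorem euler_sum_two_four :
    HasSum
      (fun n : ℕ =>
        (∑ k ∈ Finset.Icc 1 (n + 1), (1 : ℂ) / (k : ℂ) ^ 2) / ((n : ℂ) + 1) ^ 4)
      (riemannZeta 3 ^ 2 - (1 / 3) * riemannZeta 6) := by
  have hsum := hasSum_sum_range_succ_mul_zetaTerm (hasSum_doubleZeta 4 2).summable (by norm_num)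
  have stuffle33 := riemannZeta_mul_riemannZeta 3 3
  have stuffle24 := riemannZeta_mul_riemannZeta 2 4
  push_cast at hsum stuffle33 stuffle24
  have shuffle33 := riemannZeta_three_mul_riemannZeta_three
  have shuffle24 := riemannZeta_two_mul_riemannZeta_four
  have hterm (n : ℕ) : (∑ k ∈ Icc 1 (n + 1), (1 : ℂ) / (k : ℂ) ^ 2) / ((n : ℂ) + 1) ^ 4 =
      (∑ i ∈ range (n + 1), zetaTerm 2 i) * zetaTerm 4 n := by
    rw [sum_Icc_one_div_sq, div_eq_mul_one_div]
    rfl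
  simp only [hterm]
  convert hsum using 1
  linear_combination (1 / 3 : ℂ) * stuffle33 + stuffle24 + (2 / 3 : ℂ) * shuffle33 - shuffle24
end

section
/- For integers n ≥ 0 and k ≥ 0, let a_k(n) := ⌊n/2^{k+2} + 3/4⌋ - ⌊n/2^{k+2} + 1/4⌋ denote the k-th digit of the Gray code representation of n, and let S_GR(n) := Σ_{k≥0} a_k(n) (a finite sum, since a_k(n) = 0 once 2^{k+2} > 4n). Let θ(m) := 1 if the odd part of m is congruent to 1 modulo 4, and θ(m) := -1 if the odd part of m is congruent to 3 modulo 4 (every positive integer m is uniquely of the form 2^i(4j+1) or 2^i(4j+3)). Then for every integer n ≥ 1, S_GR(n) - S_GR(n-1) = θ(n). -/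
/-- The `k`-th digit of the Gray code representation of `n`:
`a_k(n) = ⌊n/2^{k+2} + 3/4⌋ - ⌊n/2^{k+2} + 1/4⌋`. -/
def grayDigit (n k : ℕ) : ℤ :=
  ⌊(n : ℚ) / 2 ^ (k + 2) + 3 / 4⌋ - ⌊(n : ℚ) / 2 ^ (k + 2) + 1 / 4⌋

/-- The digit sum of the Gray code representation of `n`; the sum has only
finitely many nonzero terms since `a_k(n) = 0` once `2^{k+2} > 4n`. -/
noncomputable def graySum (n : ℕ) : ℤ :=
  ∑' k : ℕ, grayDigit n k

/-- `θ(m) = 1` if the odd part of `m` is `≡ 1 (mod 4)`, and `θ(m) = -1` if the odd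
part of `m` is `≡ 3 (mod 4)`. -/
def grayTheta (m : ℕ) : ℤ :=
  if (ordCompl[2] m) % 4 = 1 then 1 else -1

/-!
Clearing denominators, `a_k(n) = ⌊(n + 3·2^k) / 2^(k+2)⌋ - ⌊(n + 2^k) / 2^(k+2)⌋`, and a
quotient `⌊x / d⌋` goes up by one from `x - 1` to `x` exactly when `d ∣ x`. Writing
`n = 2^i m` with `m` odd, `2^(k+2)` divides `n + c·2^k` (`c` odd) only for `k = i`, and then
iff `4 ∣ m + c`. So passing from `n - 1` to `n` changes the single digit `a_i`, by `+1` if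
`m ≡ 1` and by `-1` if `m ≡ 3 (mod 4)`.
-/

open Finset

lemma grayDigit_eq_div (n k : ℕ) :
    grayDigit n k = ((n + 3 * 2 ^ k) / 2 ^ (k + 2) : ℕ) - ((n + 2 ^ k) / 2 ^ (k + 2) : ℕ) := by
  have key (c : ℕ) (q : ℚ) (hq : q = c / 4) :
      ⌊(n : ℚ) / 2 ^ (k + 2) + q⌋ = ((n + c * 2 ^ k) / 2 ^ (k + 2) : ℕ) := by
    rw [Int.natCast_div, ← Rat.floor_intCast_div_natCast, hq]
    push_cast
    congr 1
    field_simp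
    ring
  rw [grayDigit, key 3 _ (by norm_num), key 1 _ (by norm_num), one_mul]

lemma grayDigit_eq_zero_of_lt {n k : ℕ} (h : n < 2 ^ k) : grayDigit n k = 0 := by
  have h4 : 2 ^ (k + 2) = 4 * 2 ^ k := by ring
  rw [grayDigit_eq_div, Nat.div_eq_of_lt (by omega), Nat.div_eq_of_lt (by omega), sub_self]

lemma graySum_eq_sum_range {n N : ℕ} (h : n < 2 ^ N) :
    graySum n = ∑ k ∈ range N, grayDigit n k :=
  tsum_eq_sum fun k hk => grayDigit_eq_zero_of_lt <|
    h.trans_le (Nat.pow_le_pow_right two_pos (by simpa using hk))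

lemma grayDigit_add_one_sub (n k : ℕ) :
    grayDigit (n + 1) k - grayDigit n k =
      (if 2 ^ (k + 2) ∣ n + 1 + 3 * 2 ^ k then 1 else 0) -
        (if 2 ^ (k + 2) ∣ n + 1 + 2 ^ k then 1 else 0) := by
  rw [grayDigit_eq_div, grayDigit_eq_div, add_right_comm n 1, add_right_comm n 1,
    Nat.succ_div, Nat.succ_div]
  split_ifs <;> push_cast <;> ring

lemma two_pow_dvd_two_pow_mul_add_iff {i m c k : ℕ} (hm : Odd m) (hc : Odd c) :
    2 ^ (k + 2) ∣ 2 ^ i * m + c * 2 ^ k ↔ k = i ∧ 4 ∣ m + c := by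
  obtain ⟨m, rfl⟩ := hm
  obtain ⟨c, rfl⟩ := hc
  rcases lt_trichotomy k i with hki | rfl | hik
  · obtain ⟨j, rfl⟩ := Nat.exists_eq_add_of_lt hki
    have e : 2 ^ (k + j + 1) * (2 * m + 1) + (2 * c + 1) * 2 ^ k
        = 2 ^ k * (2 * (2 ^ j * (2 * m + 1)) + 2 * c + 1) := by ring
    rw [e, pow_add, Nat.mul_dvd_mul_iff_left (by positivity)]
    omega
  · rw [pow_add, mul_comm _ (2 ^ k), ← mul_add, Nat.mul_dvd_mul_iff_left (by positivity)]
    simp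
  · obtain ⟨j, rfl⟩ := Nat.exists_eq_add_of_lt hik
    have e : 2 ^ i * (2 * m + 1) + (2 * c + 1) * 2 ^ (i + j + 1)
        = 2 ^ i * (2 * (m + (2 * c + 1) * 2 ^ j) + 1) := by ring
    have e' : 2 ^ (i + j + 1 + 2) = 2 ^ i * (2 * 2 ^ (j + 2)) := by ring
    rw [e, e', Nat.mul_dvd_mul_iff_left (by positivity)]
    refine iff_of_false (fun h => ?_) (by omega)
    have := (dvd_mul_right 2 _).trans h
    omega

lemma grayTheta_two_pow_mul {i m : ℕ} (hm : Odd m) :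
    grayTheta (2 ^ i * m) = if m % 4 = 1 then 1 else -1 := by
  rw [grayTheta, Nat.ordCompl_pow_mul_of_not_dvd i Nat.prime_two hm.not_two_dvd_nat]

lemma grayDigit_two_pow_mul_sub_pred {i m : ℕ} (hm : Odd m) (k : ℕ) :
    grayDigit (2 ^ i * m) k - grayDigit (2 ^ i * m - 1) k =
      if k = i then grayTheta (2 ^ i * m) else 0 := by
  obtain ⟨n, hn⟩ : ∃ n, 2 ^ i * m = n + 1 :=
    ⟨_, (Nat.succ_pred_eq_of_pos (Nat.mul_pos (Nat.two_pow_pos i) hm.pos)).symm⟩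
  have h3 := two_pow_dvd_two_pow_mul_add_iff (i := i) (k := k) hm (by decide : Odd 3)
  have h1 := two_pow_dvd_two_pow_mul_add_iff (i := i) (k := k) hm odd_one
  rw [one_mul] at h1
  rw [hn, Nat.add_sub_cancel, grayDigit_add_one_sub, ← hn]
  simp only [h3, h1, grayTheta_two_pow_mul hm]
  have := Nat.odd_iff.mp hm
  split_ifs <;> omega

/-- For every integer `n ≥ 1`,
`S_GR(n) - S_GR(n-1) = θ(n)`. -/
theorem gray_code_digit_sum_diff (n : ℕ) (hn : 1 ≤ n) :
    graySum n - graySum (n - 1) = grayTheta n := by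
  obtain ⟨i, m, hm, rfl⟩ := Nat.exists_eq_two_pow_mul_odd (Nat.one_le_iff_ne_zero.mp hn)
  have hN : 2 ^ i * m < 2 ^ (2 ^ i * m) := Nat.lt_two_pow_self
  have hi : i < 2 ^ i * m := i.lt_two_pow_self.trans_le (Nat.le_mul_of_pos_right _ hm.pos)
  rw [graySum_eq_sum_range hN, graySum_eq_sum_range ((Nat.sub_le _ 1).trans_lt hN),
    ← sum_sub_distrib]
  simp only [grayDigit_two_pow_mul_sub_pred hm, sum_ite_eq', mem_range, if_pos hi]
end
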